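/- (Knapp-type lower bound, q > p.) Let d ≥ 1, 0 ≤ j < d, 0 ≤ θ ≤ 1, and let p < q satisfy q = ((d−j−θ+2)/(d−j−θ))·p'. Then there is c = c(d,p,q) > 0 such that for every integer N ≥ 2, every 0 < ε₀ < 1, every ℓ ∈ (0,∞)^d with l₁ ≤ ⋯ ≤ l_d, and every g elliptic over Q^ℓ with parameters (N, ε₀): ‖E^ℓ_g‖^{RWT}_{L^p→L^q} ≥ c·(l₁⋯l_j·l_{j+1}^{θ})^{1/p' − 1/q}. -/

import Mathlib

open MeasureTheory ENNReal Filter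
open scoped RealInnerProductSpace
noncomputable section

/-- `d`-dimensional Euclidean space. -/
abbrev Euc (d : ℕ) : Type := EuclideanSpace ℝ (Fin d)

/-- The `i`-th standard basis vector of `Euc d`. -/
def stdb (d : ℕ) (i : Fin d) : Euc d := EuclideanSpace.single i 1

/-- The open box `Q^ℓ = ∏_i (-ℓ i, ℓ i)`, with sidelengths in `(0,∞]` encoded in `ℝ≥0∞`. -/
def Qset (d : ℕ) (ℓ : Fin d → ℝ≥0∞) : Set (Euc d) :=
  {ξ | ∀ i, ENNReal.ofReal |ξ i| < ℓ i}

/-- The Hölder conjugate exponent `p' = p/(p-1)`, computed in `ℝ≥0∞`. -/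
def hconj (p : ℝ≥0∞) : ℝ≥0∞ := (1 - 1 / p)⁻¹

/-- The perturbation `h = g - |·|²`. -/
def pert (d : ℕ) (g : Euc d → ℝ) : Euc d → ℝ := fun ξ => g ξ - ‖ξ‖ ^ 2

/-- The coordinatewise scaling map `A^c (x) = (c 1 * x 1, …, c d * x d)`. -/
def scaleMap (d : ℕ) (c : Fin d → ℝ) (x : Euc d) : Euc d := WithLp.toLp 2 (fun i => c i * x i)

/-- The second-order partial derivative `∂_i ∂_j f (ξ)`, an entry of the Hessian `D²f(ξ)`. -/
def d2 (d : ℕ) (f : Euc d → ℝ) (ξ : Euc d) (i j : Fin d) : ℝ :=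
  iteratedFDeriv ℝ 2 f ξ ![stdb d i, stdb d j]

/-- `g` is elliptic over the box `Q^ℓ` with parameters `(N, ε₀)`:  `g` is `C^{N+2}` on `Q^ℓ`
with positive definite Hessian, `g = |·|² + h` with `h` vanishing to second order at `0`, and
for every finite box `Q^c ⊆ Q^ℓ` all partial derivatives of order `≤ N` of all entries of
`(D²h) ∘ A^c` are `< ε₀` in absolute value on `Q^𝟙`. -/
structure IsElliptic (d : ℕ) (ℓ : Fin d → ℝ≥0∞) (g : Euc d → ℝ) (N : ℕ) (ε₀ : ℝ) : Prop where
  smooth : ContDiffOn ℝ (N + 2) g (Qset d ℓ)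
  posdef : ∀ ξ ∈ Qset d ℓ, ∀ v : Euc d, v ≠ 0 → 0 < iteratedFDeriv ℝ 2 g ξ ![v, v]
  zero : pert d g 0 = 0
  grad_zero : fderiv ℝ (pert d g) 0 = 0
  hess_zero : ∀ i j, d2 d (pert d g) 0 i j = 0
  bound : ∀ c : Fin d → ℝ, (∀ i, 0 < c i) →
    Qset d (fun i => ENNReal.ofReal (c i)) ⊆ Qset d ℓ →
    ∀ m : ℕ, m ≤ N → ∀ i j : Fin d, ∀ v : Fin m → Fin d,
      ∀ ξ ∈ Qset d (fun _ => 1),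
        |iteratedFDeriv ℝ m (fun x => d2 d (pert d g) (scaleMap d c x) i j) ξ
          (fun r => stdb d (v r))| < ε₀

/-- The extension operator `E^ℓ_g f (t,x) = ∫_{Q^ℓ} e^{i(t g(ξ) + x·ξ)} f(ξ) dξ`. -/
def extOp (d : ℕ) (ℓ : Fin d → ℝ≥0∞) (g : Euc d → ℝ) (f : Euc d → ℂ)
    (tx : ℝ × Euc d) : ℂ :=
  ∫ ξ in Qset d ℓ, Complex.exp (Complex.I * ((tx.1 * g ξ + inner ℝ ξ tx.2 : ℝ) : ℂ)) * f ξ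

/-- The `L^p(Q^ℓ) → L^q(ℝ^{1+d})` operator norm of `E^ℓ_g`. -/
def extOpNorm (d : ℕ) (ℓ : Fin d → ℝ≥0∞) (g : Euc d → ℝ) (p q : ℝ≥0∞) : ℝ≥0∞ :=
  sInf {C : ℝ≥0∞ | ∀ f : Euc d → ℂ, MemLp f p (volume.restrict (Qset d ℓ)) →
    eLpNorm (extOp d ℓ g f) q volume ≤ C * eLpNorm f p (volume.restrict (Qset d ℓ))}

/-- The pairing `⟨u, v⟩ = ∫ u conj(v)` on `ℝ^{1+d}`. -/
def pairing (d : ℕ) (u v : ℝ × Euc d → ℂ) : ℂ := ∫ y, u y * (starRingEnd ℂ) (v y)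

/-- The restricted weak type `(p,q)` "norm" of an operator `T` acting on functions
supported in `S`. -/
def rwtNormOp (d : ℕ) (S : Set (Euc d)) (T : (Euc d → ℂ) → (ℝ × Euc d) → ℂ)
    (p q : ℝ≥0∞) : ℝ≥0∞ :=
  ⨆ (E : Set (Euc d)) (F : Set (ℝ × Euc d)) (fE : Euc d → ℂ) (gF : ℝ × Euc d → ℂ)
    (_ : MeasurableSet E) (_ : E ⊆ S) (_ : 0 < volume E) (_ : volume E < ⊤)
    (_ : MeasurableSet F) (_ : 0 < volume F) (_ : volume F < ⊤)
    (_ : Measurable fE) (_ : ∀ x, ‖fE x‖ ≤ E.indicator (fun _ => (1 : ℝ)) x)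
    (_ : Measurable gF) (_ : ∀ y, ‖gF y‖ ≤ F.indicator (fun _ => (1 : ℝ)) y),
    ENNReal.ofReal ‖pairing d (T fE) gF‖ /
      (volume E ^ (1 / p).toReal * volume F ^ (1 - (1 / q).toReal))

/-- The restricted weak type norm `‖E^ℓ_g‖^{RWT}_{L^p → L^q}`. -/
def rwtNorm (d : ℕ) (ℓ : Fin d → ℝ≥0∞) (g : Euc d → ℝ) (p q : ℝ≥0∞) : ℝ≥0∞ :=
  rwtNormOp d (Qset d ℓ) (extOp d ℓ g) p q

/-- The product `l₁ ⋯ l_j` of the first `j` sidelengths. -/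
def sidep (d : ℕ) (ℓ : Fin d → ℝ≥0∞) (j : ℕ) : ℝ≥0∞ :=
  ∏ i ∈ Finset.univ.filter (fun i : Fin d => (i : ℕ) < j), ℓ i

/-!
Knapp's example. Let `M = ℓ_{j+1}` and `λ_i = min(ℓ_i, M)`, i.e. `λ = (ℓ₁, …, ℓ_j, M, …, M)`,
and let `F` be the dual slab `|t| < δ/M²`, `|x_i| < δ/λ_i`. On `Q^λ` the Hessian bound in the
ellipticity hypothesis gives `|g| ≤ (d² + 1) d M²`, so for `δ = 1/(d(d² + 2))` the phase
`t g(ξ) + x·ξ` stays in `[-1, 1]` on `F × Q^λ`; hence `Re ⟨E 1_{Q^λ}, 1_F⟩ ≥ |Q^λ| |F| / 2` and the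
restricted weak type norm is at least `|Q^λ|^{1/p'} |F|^{1/q} / 2`. Since `|Q^λ| ∼ ℓ₁⋯ℓ_j M^{d-j}`
and `|F| ∼ (ℓ₁⋯ℓ_j M^{d-j+2})⁻¹`, the relation `(d-j-θ)(1/p' - 1/q) = 2/q` between the exponents
makes all powers of `M` except `M^θ` cancel.
-/

section Linear

variable {ι F : Type*} [Fintype ι] [DecidableEq ι] [NormedAddCommGroup F] [NormedSpace ℝ F]

lemma EuclideanSpace.norm_clm_le_card_mul (φ : EuclideanSpace ℝ ι →L[ℝ] F) {C : ℝ} (hC : 0 ≤ C)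
    (h : ∀ i, ‖φ (EuclideanSpace.single i 1)‖ ≤ C) : ‖φ‖ ≤ Fintype.card ι * C := by
  refine φ.opNorm_le_bound (by positivity) fun u => ?_
  have hu : u = ∑ i, u i • EuclideanSpace.single i (1 : ℝ) := by
    simpa using ((EuclideanSpace.basisFun ι ℝ).sum_repr u).symm
  calc ‖φ u‖ = ‖∑ i, u i • φ (EuclideanSpace.single i 1)‖ := by
        conv_lhs => rw [hu]
        simp only [map_sum, map_smul]
    _ ≤ ∑ _i : ι, ‖u‖ * C := by
        refine (norm_sum_le _ _).trans (Finset.sum_le_sum fun i _ => ?_)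
        rw [norm_smul]
        exact mul_le_mul (PiLp.norm_apply_le u i) (h i) (norm_nonneg _) (norm_nonneg _)
    _ = Fintype.card ι * C * ‖u‖ := by
        rw [Finset.sum_const, Finset.card_univ, nsmul_eq_mul]; ring

lemma EuclideanSpace.norm_bilin_le_card_sq_mul
    (L : EuclideanSpace ℝ ι →L[ℝ] EuclideanSpace ℝ ι →L[ℝ] F) {C : ℝ} (hC : 0 ≤ C)
    (h : ∀ i j, ‖L (EuclideanSpace.single i 1) (EuclideanSpace.single j 1)‖ ≤ C) :
    ‖L‖ ≤ Fintype.card ι ^ 2 * C := by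
  refine L.opNorm_le_bound (by positivity) fun u => ?_
  have hcol : ∀ j, ‖L.flip (EuclideanSpace.single j 1)‖ ≤ Fintype.card ι * C := fun j =>
    EuclideanSpace.norm_clm_le_card_mul _ hC fun i => h i j
  calc ‖L u‖ ≤ Fintype.card ι * (Fintype.card ι * C * ‖u‖) :=
        EuclideanSpace.norm_clm_le_card_mul _ (by positivity) fun j =>
          (L.flip (EuclideanSpace.single j 1)).le_of_opNorm_le (hcol j) u
    _ = Fintype.card ι ^ 2 * C * ‖u‖ := by ring

end Linear

lemma norm_le_mul_norm_sq_of_norm_fderiv_fderiv_le {E F : Type*} [NormedAddCommGroup E]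
    [NormedSpace ℝ E] [NormedAddCommGroup F] [NormedSpace ℝ F] {f : E → F} {s : Set E} {C : ℝ}
    (hs : Convex ℝ s) (h0 : (0 : E) ∈ s) (hf : ∀ x ∈ s, DifferentiableAt ℝ f x)
    (hf' : ∀ x ∈ s, DifferentiableAt ℝ (fderiv ℝ f) x) (hf0 : f 0 = 0)
    (hdf0 : fderiv ℝ f 0 = 0) (hC : ∀ x ∈ s, ‖fderiv ℝ (fderiv ℝ f) x‖ ≤ C) {x : E}
    (hx : x ∈ s) : ‖f x‖ ≤ C * ‖x‖ ^ 2 := by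
  have hC0 : 0 ≤ C := (norm_nonneg (fderiv ℝ (fderiv ℝ f) 0)).trans (hC 0 h0)
  have hseg : segment ℝ 0 x ⊆ s := hs.segment_subset h0 hx
  have hgrad : ∀ y ∈ segment ℝ 0 x, ‖fderiv ℝ f y‖ ≤ C * ‖x‖ := by
    intro y hy
    have hyx : ‖y‖ ≤ ‖x‖ := by
      simpa using (convex_closedBall (0 : E) ‖x‖).segment_subset
        (Metric.mem_closedBall_self (norm_nonneg x)) (by simp) hy
    simpa [hdf0] using (hs.norm_image_sub_le_of_norm_fderiv_le hf' hC h0 (hseg hy)).trans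
      (mul_le_mul_of_nonneg_left (by simpa using hyx) hC0)
  simpa [hf0, sq, mul_assoc] using (convex_segment 0 x).norm_image_sub_le_of_norm_fderiv_le
    (fun y hy => hf y (hseg hy)) hgrad (left_mem_segment ℝ 0 x) (right_mem_segment ℝ 0 x)

section Box

variable {d : ℕ}

lemma isOpen_Qset (ℓ : Fin d → ℝ≥0∞) : IsOpen (Qset d ℓ) := by
  have hQ : Qset d ℓ = ⋂ i, {ξ : Euc d | ENNReal.ofReal |ξ i| < ℓ i} := by
    ext ξ; simp [Qset]
  rw [hQ]
  exact isOpen_iInter_of_finite fun i =>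
    isOpen_lt (ENNReal.continuous_ofReal.comp (by fun_prop)) continuous_const

lemma Qset_mono {ℓ ℓ' : Fin d → ℝ≥0∞} (h : ∀ i, ℓ i ≤ ℓ' i) : Qset d ℓ ⊆ Qset d ℓ' :=
  fun _ hξ i => (hξ i).trans_le (h i)

lemma mem_Qset_ofReal_iff {r : Fin d → ℝ} {ξ : Euc d} :
    ξ ∈ Qset d (fun i => ENNReal.ofReal (r i)) ↔ ∀ i, |ξ i| < r i :=
  forall_congr' fun _ => ENNReal.ofReal_lt_ofReal_iff'.trans
    (and_iff_left_of_imp fun h => (abs_nonneg _).trans_lt h)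

lemma Qset_ofReal_eq_preimage (r : Fin d → ℝ) :
    Qset d (fun i => ENNReal.ofReal (r i)) =
      WithLp.ofLp ⁻¹' Set.univ.pi fun i => Set.Ioo (-r i) (r i) := by
  ext ξ
  simp [mem_Qset_ofReal_iff, abs_lt]

lemma convex_Qset_ofReal (r : Fin d → ℝ) : Convex ℝ (Qset d (fun i => ENNReal.ofReal (r i))) := by
  rw [Qset_ofReal_eq_preimage]
  exact (convex_pi fun i _ => convex_Ioo _ _).linear_preimage
    (WithLp.linearEquiv 2 ℝ (Fin d → ℝ)).toLinearMap

lemma volume_Qset_ofReal {r : Fin d → ℝ} (hr : ∀ i, 0 ≤ r i) :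
    volume (Qset d (fun i => ENNReal.ofReal (r i))) = ENNReal.ofReal (∏ i, 2 * r i) := by
  rw [Qset_ofReal_eq_preimage]
  refine ((EuclideanSpace.volume_preserving_symm_measurableEquiv_toLp (Fin d)).measure_preimage
    (MeasurableSet.univ_pi fun i => measurableSet_Ioo).nullMeasurableSet).trans ?_
  rw [volume_pi_pi, ENNReal.ofReal_prod_of_nonneg fun i _ => by linarith [hr i]]
  simp only [Real.volume_Ioo]
  congr! 2 with i
  ring

end Box

namespace IsElliptic

variable {d N : ℕ} {ℓ : Fin d → ℝ≥0∞} {g : Euc d → ℝ} {ε₀ : ℝ}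

lemma contDiffOn_pert (hg : IsElliptic d ℓ g N ε₀) : ContDiffOn ℝ 2 (pert d g) (Qset d ℓ) :=
  (hg.smooth.of_le (by exact_mod_cast Nat.le_add_left 2 N)).sub
    (contDiff_norm_sq ℝ).contDiffOn

lemma abs_d2_pert_lt (hg : IsElliptic d ℓ g N ε₀) {r : Fin d → ℝ} (hr : ∀ i, 0 < r i)
    (hsub : Qset d (fun i => ENNReal.ofReal (r i)) ⊆ Qset d ℓ) {η : Euc d}
    (hη : η ∈ Qset d (fun i => ENNReal.ofReal (r i))) (i j : Fin d) :
    |d2 d (pert d g) η i j| < ε₀ := by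
  set x : Euc d := WithLp.toLp 2 fun k => η k / r k
  have hx : x ∈ Qset d (fun _ => 1) := by
    simpa [x, ← ENNReal.ofReal_one, mem_Qset_ofReal_iff, abs_div, abs_of_pos (hr _),
      div_lt_one (hr _)] using mem_Qset_ofReal_iff.1 hη
  have hscale : scaleMap d r x = η := by
    ext k
    simp [scaleMap, x, mul_div_cancel₀ _ (hr k).ne']
  simpa [hscale] using hg.bound r hr hsub 0 (Nat.zero_le N) i j Fin.elim0 x hx

lemma abs_pert_le (hg : IsElliptic d ℓ g N ε₀) (hε₀ : ε₀ ≤ 1) {r : Fin d → ℝ}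
    (hr : ∀ i, 0 < r i) (hsub : Qset d (fun i => ENNReal.ofReal (r i)) ⊆ Qset d ℓ) {ξ : Euc d}
    (hξ : ξ ∈ Qset d (fun i => ENNReal.ofReal (r i))) : |pert d g ξ| ≤ d ^ 2 * ‖ξ‖ ^ 2 := by
  have hC2 : ∀ x ∈ Qset d ℓ, ContDiffAt ℝ 2 (pert d g) x := fun x hx =>
    hg.contDiffOn_pert.contDiffAt ((isOpen_Qset ℓ).mem_nhds hx)
  have hhess : ∀ η ∈ Qset d (fun i => ENNReal.ofReal (r i)),
      ‖fderiv ℝ (fderiv ℝ (pert d g)) η‖ ≤ d ^ 2 := by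
    intro η hη
    simpa using EuclideanSpace.norm_bilin_le_card_sq_mul (fderiv ℝ (fderiv ℝ (pert d g)) η)
      zero_le_one fun i j => by
        simpa [d2, iteratedFDeriv_two_apply, stdb] using
          ((hg.abs_d2_pert_lt hr hsub hη i j).trans_le hε₀).le
  refine norm_le_mul_norm_sq_of_norm_fderiv_fderiv_le (convex_Qset_ofReal r)
    (mem_Qset_ofReal_iff.2 fun i => by simpa using hr i)
    (fun x hx => (hC2 x (hsub hx)).differentiableAt (by norm_num))
    (fun x hx => ((hC2 x (hsub hx)).fderiv_right (m := 1) (by norm_num)).differentiableAt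
      (by norm_num)) hg.zero hg.grad_zero hhess hξ

lemma abs_phase_le (hg : IsElliptic d ℓ g N ε₀) (hε₀ : ε₀ ≤ 1) {r : Fin d → ℝ} (hr : ∀ i, 0 < r i)
    (hsub : Qset d (fun i => ENNReal.ofReal (r i)) ⊆ Qset d ℓ) {M δ : ℝ} (hM : 0 < M)
    (hrM : ∀ i, r i ≤ M) {ξ : Euc d} (hξ : ξ ∈ Qset d (fun i => ENNReal.ofReal (r i)))
    {t : ℝ} (ht : |t| ≤ δ / M ^ 2) {x : Euc d} (hx : ∀ i, |x i| ≤ δ / r i) :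
    |t * g ξ + ⟪ξ, x⟫| ≤ d * (d ^ 2 + 2) * δ := by
  have hξr := mem_Qset_ofReal_iff.1 hξ
  have hnorm : ‖ξ‖ ^ 2 ≤ d * M ^ 2 := by
    rw [EuclideanSpace.norm_sq_eq]
    calc ∑ i, ‖ξ i‖ ^ 2 ≤ ∑ _i : Fin d, M ^ 2 := Finset.sum_le_sum fun i _ =>
          pow_le_pow_left₀ (norm_nonneg _) ((hξr i).le.trans (hrM i)) 2
      _ = d * M ^ 2 := by simp
  have hgξ : |g ξ| ≤ (d ^ 2 + 1) * (d * M ^ 2) := by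
    have hpert := hg.abs_pert_le hε₀ hr hsub hξ
    calc |g ξ| = |‖ξ‖ ^ 2 + pert d g ξ| := by rw [pert, add_sub_cancel]
      _ ≤ ‖ξ‖ ^ 2 + d ^ 2 * ‖ξ‖ ^ 2 := by
          refine (abs_add_le _ _).trans ?_
          rw [abs_of_nonneg (sq_nonneg _)]
          gcongr
      _ ≤ (d ^ 2 + 1) * (d * M ^ 2) := by nlinarith
  have htime : |t * g ξ| ≤ (d ^ 2 + 1) * d * δ := by
    rw [abs_mul]
    calc |t| * |g ξ| ≤ δ / M ^ 2 * ((d ^ 2 + 1) * (d * M ^ 2)) :=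
          mul_le_mul ht hgξ (abs_nonneg _) ((abs_nonneg t).trans ht)
      _ = (d ^ 2 + 1) * d * δ := by field_simp
  have hspace : |⟪ξ, x⟫| ≤ d * δ := by
    calc |⟪ξ, x⟫| = |∑ i, ξ i * x i| := by simp [PiLp.inner_apply, mul_comm]
      _ ≤ ∑ i, |ξ i| * |x i| := by
          simpa only [abs_mul] using Finset.abs_sum_le_sum_abs (fun i => ξ i * x i) Finset.univ
      _ ≤ ∑ _i : Fin d, δ := Finset.sum_le_sum fun i _ => by
          calc |ξ i| * |x i| ≤ r i * (δ / r i) :=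
                mul_le_mul (hξr i).le (hx i) (abs_nonneg _) (hr i).le
            _ = δ := mul_div_cancel₀ δ (hr i).ne'
      _ = d * δ := by simp
  calc |t * g ξ + ⟪ξ, x⟫| ≤ (d ^ 2 + 1) * d * δ + d * δ :=
        (abs_add_le _ _).trans (add_le_add htime hspace)
    _ = d * (d ^ 2 + 2) * δ := by ring

end IsElliptic

section Pairing

variable {d : ℕ} {ℓ : Fin d → ℝ≥0∞} {g : Euc d → ℝ} {E : Set (Euc d)} {F : Set (ℝ × Euc d)}

lemma extOp_indicator (hE : MeasurableSet E) (hEℓ : E ⊆ Qset d ℓ) (y : ℝ × Euc d) :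
    extOp d ℓ g (E.indicator fun _ => 1) y =
      ∫ ξ in E, Complex.exp (Complex.I * ((y.1 * g ξ + ⟪ξ, y.2⟫ : ℝ) : ℂ)) := by
  rw [extOp, ← integral_indicator hE, ← integral_indicator (isOpen_Qset ℓ).measurableSet]
  congr 1; ext ξ
  by_cases hξ : ξ ∈ E
  · simp [hξ, hEℓ hξ]
  · by_cases hξ' : ξ ∈ Qset d ℓ <;> simp [hξ, hξ']

lemma pairing_indicator (u : ℝ × Euc d → ℂ) (hF : MeasurableSet F) :
    pairing d u (F.indicator fun _ => 1) = ∫ y in F, u y := by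
  rw [pairing, ← integral_indicator hF]
  congr 1; ext y
  by_cases hy : y ∈ F <;> simp [hy]

lemma continuous_setIntegral_cexp_phase (hE : MeasurableSet E) (hEfin : volume E < ⊤)
    (hg : ContinuousOn g E) :
    Continuous fun y : ℝ × Euc d =>
      ∫ ξ in E, Complex.exp (Complex.I * ((y.1 * g ξ + ⟪ξ, y.2⟫ : ℝ) : ℂ)) := by
  refine continuous_of_dominated (bound := fun _ => 1) (fun y => ?_)
    (fun y => ae_of_all _ fun ξ => (Complex.norm_exp_I_mul_ofReal _).le)
    (integrableOn_const hEfin.ne) (ae_of_all _ fun ξ => by fun_prop)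
  exact ContinuousOn.aestronglyMeasurable (by fun_prop) hE

lemma mul_measureReal_le_re_pairing {c : ℝ} (hE : MeasurableSet E) (hEℓ : E ⊆ Qset d ℓ)
    (hEfin : volume E < ⊤) (hF : MeasurableSet F) (hFfin : volume F < ⊤) (hg : ContinuousOn g E)
    (hcos : ∀ y ∈ F, ∀ ξ ∈ E, c ≤ Real.cos (y.1 * g ξ + ⟪ξ, y.2⟫)) :
    c * (volume.real E * volume.real F) ≤
      (pairing d (extOp d ℓ g (E.indicator fun _ => 1)) (F.indicator fun _ => 1)).re := by
  set ψ : ℝ × Euc d → ℂ := fun y =>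
    ∫ ξ in E, Complex.exp (Complex.I * ((y.1 * g ξ + ⟪ξ, y.2⟫ : ℝ) : ℂ))
  have hψ : IntegrableOn ψ F := (integrableOn_const (C := volume.real E) hFfin.ne).mono'
    (continuous_setIntegral_cexp_phase hE hEfin hg).aestronglyMeasurable.restrict
    (ae_of_all _ fun y => (norm_setIntegral_le_of_norm_le_const hEfin fun ξ _ =>
      (Complex.norm_exp_I_mul_ofReal (y.1 * g ξ + ⟪ξ, y.2⟫)).le).trans_eq (one_mul _))
  have hre : ∀ y, (ψ y).re = ∫ ξ in E, Real.cos (y.1 * g ξ + ⟪ξ, y.2⟫) := fun y => by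
    rw [← RCLike.re_eq_complex_re, ← integral_re (integrableOn_const (C := (1 : ℝ)) hEfin.ne
      |>.mono' (ContinuousOn.aestronglyMeasurable (by fun_prop) hE)
      (ae_of_all _ fun ξ => (Complex.norm_exp_I_mul_ofReal _).le))]
    simp_rw [mul_comm Complex.I, RCLike.re_eq_complex_re, Complex.exp_ofReal_mul_I_re]
  rw [pairing_indicator _ hF, funext (extOp_indicator hE hEℓ), ← RCLike.re_eq_complex_re,
    ← integral_re hψ]
  calc c * (volume.real E * volume.real F) = ∫ _y in F, ∫ _ξ in E, c := by
        simp [mul_comm, mul_assoc]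
    _ ≤ ∫ y in F, RCLike.re (ψ y) := by
        refine setIntegral_mono_on (integrableOn_const hFfin.ne) hψ.re hF fun y hy => ?_
        rw [RCLike.re_eq_complex_re, hre]
        refine setIntegral_mono_on (integrableOn_const hEfin.ne) ?_ hE (hcos y hy)
        exact (integrableOn_const (C := (1 : ℝ)) hEfin.ne).mono'
          (ContinuousOn.aestronglyMeasurable (by fun_prop) hE)
          (ae_of_all _ fun ξ => Real.abs_cos_le_one _)

end Pairing

lemma le_rwtNormOp {d : ℕ} {S : Set (Euc d)} {T : (Euc d → ℂ) → (ℝ × Euc d) → ℂ} {p q : ℝ≥0∞}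
    {E : Set (Euc d)} {F : Set (ℝ × Euc d)} {fE : Euc d → ℂ} {gF : ℝ × Euc d → ℂ}
    (hE : MeasurableSet E) (hES : E ⊆ S) (hE0 : 0 < volume E) (hEfin : volume E < ⊤)
    (hF : MeasurableSet F) (hF0 : 0 < volume F) (hFfin : volume F < ⊤)
    (hfE : Measurable fE) (hfE1 : ∀ x, ‖fE x‖ ≤ E.indicator (fun _ => (1 : ℝ)) x)
    (hgF : Measurable gF) (hgF1 : ∀ y, ‖gF y‖ ≤ F.indicator (fun _ => (1 : ℝ)) y) :
    ENNReal.ofReal ‖pairing d (T fE) gF‖ /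
        (volume E ^ (1 / p).toReal * volume F ^ (1 - (1 / q).toReal)) ≤
      rwtNormOp d S T p q :=
  le_iSup_of_le E <| le_iSup_of_le F <| le_iSup_of_le fE <| le_iSup_of_le gF <|
    le_iSup_of_le hE <| le_iSup_of_le hES <| le_iSup_of_le hE0 <| le_iSup_of_le hEfin <|
    le_iSup_of_le hF <| le_iSup_of_le hF0 <| le_iSup_of_le hFfin <| le_iSup_of_le hfE <|
    le_iSup_of_le hfE1 <| le_iSup_of_le hgF <| le_iSup_of_le hgF1 le_rfl

lemma norm_indicator_one_le {α : Type*} (s : Set α) (x : α) :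
    ‖s.indicator (fun _ => (1 : ℂ)) x‖ ≤ s.indicator (fun _ => (1 : ℝ)) x := by
  by_cases hx : x ∈ s <;> simp [hx]

lemma ofReal_mul_rpow_le_rwtNorm {d : ℕ} {ℓ : Fin d → ℝ≥0∞} {g : Euc d → ℝ} {p q : ℝ≥0∞}
    {E : Set (Euc d)} {F : Set (ℝ × Euc d)} {c : ℝ} (hE : MeasurableSet E)
    (hEℓ : E ⊆ Qset d ℓ) (hE0 : 0 < volume E) (hEfin : volume E < ⊤) (hF : MeasurableSet F)
    (hF0 : 0 < volume F) (hFfin : volume F < ⊤) (hg : ContinuousOn g E)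
    (hcos : ∀ y ∈ F, ∀ ξ ∈ E, c ≤ Real.cos (y.1 * g ξ + ⟪ξ, y.2⟫)) :
    ENNReal.ofReal c * volume E ^ (1 - (1 / p).toReal) * volume F ^ (1 / q).toReal ≤
      rwtNorm d ℓ g p q := by
  refine le_trans ?_ (le_rwtNormOp hE hEℓ hE0 hEfin hF hF0 hFfin
    (measurable_const.indicator hE) (norm_indicator_one_le E)
    (measurable_const.indicator hF) (norm_indicator_one_le F))
  have hpair : ENNReal.ofReal c * volume E * volume F ≤
      ENNReal.ofReal ‖pairing d (extOp d ℓ g (E.indicator fun _ => 1))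
        (F.indicator fun _ => 1)‖ := by
    rw [← ofReal_toReal hEfin.ne, ← ofReal_toReal hFfin.ne, mul_assoc,
      ← ENNReal.ofReal_mul toReal_nonneg, ← ENNReal.ofReal_mul' (by positivity)]
    exact ENNReal.ofReal_le_ofReal ((mul_measureReal_le_re_pairing hE hEℓ hEfin hF hFfin hg
      hcos).trans (Complex.re_le_norm _))
  have hrpow : ∀ {x : ℝ≥0∞}, 0 < x → x < ⊤ → ∀ s : ℝ, x ^ (1 - s) * x ^ s = x :=
    fun h0 htop s => by rw [← ENNReal.rpow_add _ _ h0.ne' htop.ne, sub_add_cancel, ENNReal.rpow_one]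
  rw [ENNReal.le_div_iff_mul_le (Or.inl (by positivity)) (Or.inl (by finiteness))]
  calc ENNReal.ofReal c * volume E ^ (1 - (1 / p).toReal) * volume F ^ (1 / q).toReal *
        (volume E ^ (1 / p).toReal * volume F ^ (1 - (1 / q).toReal))
      = ENNReal.ofReal c * (volume E ^ (1 - (1 / p).toReal) * volume E ^ (1 / p).toReal) *
          (volume F ^ (1 - (1 / q).toReal) * volume F ^ (1 / q).toReal) := by ring
    _ = ENNReal.ofReal c * volume E * volume F := by rw [hrpow hE0 hEfin, hrpow hF0 hFfin]
    _ ≤ _ := hpair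

lemma IsElliptic.ofReal_le_rwtNorm_of_box {d N : ℕ} {ℓ : Fin d → ℝ≥0∞} {g : Euc d → ℝ}
    {ε₀ : ℝ} (hg : IsElliptic d ℓ g N ε₀) (hε₀ : ε₀ ≤ 1) {r : Fin d → ℝ} (hr : ∀ i, 0 < r i)
    (hsub : Qset d (fun i => ENNReal.ofReal (r i)) ⊆ Qset d ℓ) {M δ : ℝ} (hM : 0 < M)
    (hrM : ∀ i, r i ≤ M) (hδ : 0 < δ) (hδ1 : d * (d ^ 2 + 2) * δ ≤ 1) (p q : ℝ≥0∞) :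
    ENNReal.ofReal (1 / 2 * ((2 ^ d * ∏ i, r i) ^ (1 - (1 / p).toReal) *
        ((2 * δ) ^ (d + 1) / (M ^ 2 * ∏ i, r i)) ^ (1 / q).toReal)) ≤
      rwtNorm d ℓ g p q := by
  have hP : 0 < ∏ i, r i := Finset.prod_pos fun i _ => hr i
  set E := Qset d (fun i => ENNReal.ofReal (r i))
  set F := Set.Ioo (-(δ / M ^ 2)) (δ / M ^ 2) ×ˢ Qset d (fun i => ENNReal.ofReal (δ / r i))
  have hvolE : volume E = ENNReal.ofReal (2 ^ d * ∏ i, r i) := by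
    rw [volume_Qset_ofReal fun i => (hr i).le, Finset.prod_mul_distrib]
    simp
  have hvolF : volume F = ENNReal.ofReal ((2 * δ) ^ (d + 1) / (M ^ 2 * ∏ i, r i)) := by
    rw [Measure.volume_eq_prod, Measure.prod_prod, Real.volume_Ioo, sub_neg_eq_add,
      volume_Qset_ofReal fun i => (div_pos hδ (hr i)).le, ← ENNReal.ofReal_mul (by positivity)]
    congr 1
    simp_rw [mul_div_assoc', Finset.prod_div_distrib, Finset.prod_const, Finset.card_univ,
      Fintype.card_fin]
    field_simp
    ring
  have hcos : ∀ y ∈ F, ∀ ξ ∈ E, 1 / 2 ≤ Real.cos (y.1 * g ξ + ⟪ξ, y.2⟫) := by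
    rintro ⟨t, x⟩ ⟨ht, hx⟩ ξ hξ
    have hphase := hg.abs_phase_le hε₀ hr hsub hM hrM hξ (abs_lt.2 ht).le
      fun i => (mem_Qset_ofReal_iff.1 hx i).le
    have hsq : (t * g ξ + ⟪ξ, x⟫) ^ 2 ≤ 1 := by
      rw [← sq_abs]
      exact pow_le_one₀ (abs_nonneg _) (hphase.trans hδ1)
    linarith [Real.one_sub_sq_div_two_le_cos (x := t * g ξ + ⟪ξ, x⟫)]
  have hmeasE : MeasurableSet E := (isOpen_Qset _).measurableSet
  have hmeasF : MeasurableSet F := measurableSet_Ioo.prod (isOpen_Qset _).measurableSet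
  have hbound := ofReal_mul_rpow_le_rwtNorm (p := p) (q := q) hmeasE hsub
    (by rw [hvolE]; positivity) (by rw [hvolE]; finiteness) hmeasF
    (by rw [hvolF]; positivity) (by rw [hvolF]; finiteness)
    (hg.smooth.continuousOn.mono hsub) hcos
  rwa [hvolE, hvolF, ENNReal.ofReal_rpow_of_pos (by positivity),
    ENNReal.ofReal_rpow_of_pos (by positivity), mul_assoc, ← ENNReal.ofReal_mul (by positivity),
    ← ENNReal.ofReal_mul (by norm_num)] at hbound

lemma toReal_one_div_hconj {p : ℝ≥0∞} (hp : 1 ≤ p) :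
    (1 / hconj p).toReal = 1 - (1 / p).toReal := by
  rw [hconj, one_div, inv_inv, ENNReal.toReal_sub_of_le (by simpa using ENNReal.inv_le_one.2 hp)
    one_ne_top]
  simp

lemma natCast_sub_natCast_sub_ofReal {d j : ℕ} {θ : ℝ} (hθ : 0 ≤ θ) (hjd : j ≤ d) :
    (d : ℝ≥0∞) - j - ENNReal.ofReal θ = ENNReal.ofReal (d - j - θ) := by
  rw [← ENNReal.natCast_sub, ← ENNReal.ofReal_natCast, ← ENNReal.ofReal_sub _ hθ,
    Nat.cast_sub hjd]

lemma mul_toReal_sub_eq_of_eq_div_mul {k : ℝ} (hk : 0 ≤ k) {P q : ℝ≥0∞}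
    (hq : q = (ENNReal.ofReal k + 2) / ENNReal.ofReal k * P) :
    k * ((1 / P).toReal - (1 / q).toReal) = 2 * (1 / q).toReal := by
  rcases hk.eq_or_lt with rfl | hk
  · simp [hq]
  · have hq' : (1 / q).toReal = k / (k + 2) * (1 / P).toReal := by
      rw [hq, ← ENNReal.ofReal_ofNat 2, ← ENNReal.ofReal_add hk.le zero_le_two,
        ← ENNReal.ofReal_div_of_pos hk, one_div,
        ENNReal.mul_inv (Or.inl (by simp; positivity)) (Or.inl ENNReal.ofReal_ne_top),
        ← ENNReal.ofReal_inv_of_pos (by positivity), inv_div, ENNReal.toReal_mul,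
        ENNReal.toReal_ofReal (by positivity), one_div]
    rw [hq']
    field_simp
    ring

lemma exponent_relation_of_eq_mul_hconj {d j : ℕ} (hj : j < d) {θ : ℝ} (hθ : 0 ≤ θ)
    (hθ' : θ ≤ 1) {p q : ℝ≥0∞} (hp : 1 ≤ p)
    (hq : q = (((d : ℝ≥0∞) - j - ENNReal.ofReal θ + 2) /
      ((d : ℝ≥0∞) - j - ENNReal.ofReal θ)) * hconj p) :
    ((d : ℝ) - j - θ) * (1 - (1 / p).toReal - (1 / q).toReal) = 2 * (1 / q).toReal := by
  have hjd : (j : ℝ) + 1 ≤ d := by exact_mod_cast hj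
  rw [natCast_sub_natCast_sub_ofReal hθ hj.le] at hq
  rw [← toReal_one_div_hconj hp]
  exact mul_toReal_sub_eq_of_eq_div_mul (by linarith) hq

lemma rpow_mul_rpow_eq_of_mul_sub_eq {A B L M k a b : ℝ} (hA : 0 < A) (hB : 0 < B) (hL : 0 < L)
    (hM : 0 < M) (hk : k * (a - b) = 2 * b) :
    (A * (L * M ^ k)) ^ a * (B / (M ^ 2 * (L * M ^ k))) ^ b = A ^ a * B ^ b * L ^ (a - b) := by
  have hMk : 0 < M ^ k := Real.rpow_pos_of_pos hM k
  have hP : 0 < L * M ^ k := by positivity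
  rw [← Real.exp_log (by positivity : 0 < (A * (L * M ^ k)) ^ a * (B / (M ^ 2 * (L * M ^ k))) ^ b),
    ← Real.exp_log (by positivity : 0 < A ^ a * B ^ b * L ^ (a - b))]
  congr 1
  rw [Real.log_mul (by positivity) (by positivity), Real.log_mul (by positivity) (by positivity),
    Real.log_mul (by positivity) (by positivity), Real.log_rpow (by positivity),
    Real.log_rpow (by positivity), Real.log_rpow hA, Real.log_rpow hB, Real.log_rpow hL,
    Real.log_mul hA.ne' hP.ne', Real.log_div hB.ne' (by positivity),
    Real.log_mul (by positivity) hP.ne', Real.log_mul hL.ne' hMk.ne', Real.log_pow,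
    Real.log_rpow hM]
  linear_combination Real.log M * hk

lemma prod_toReal_min {d j : ℕ} (hj : j < d) (ℓ : Fin d → ℝ≥0∞) (hℓj : 0 < (ℓ ⟨j, hj⟩).toReal)
    (θ : ℝ) :
    ∏ i, (ℓ (min i ⟨j, hj⟩)).toReal =
      (∏ i ∈ Finset.univ.filter (fun i : Fin d => (i : ℕ) < j), (ℓ i).toReal) *
        (ℓ ⟨j, hj⟩).toReal ^ θ * (ℓ ⟨j, hj⟩).toReal ^ ((d : ℝ) - j - θ) := by
  rw [← Finset.prod_filter_mul_prod_filter_not Finset.univ (fun i : Fin d => (i : ℕ) < j),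
    mul_assoc, ← Real.rpow_add hℓj, add_sub_cancel, ← Nat.cast_sub hj.le, Real.rpow_natCast]
  congr 1
  · exact Finset.prod_congr rfl fun i hi => by
      rw [min_eq_left (Fin.le_iff_val_le_val.2 (Finset.mem_filter.1 hi).2.le)]
  · rw [Finset.prod_congr rfl fun i hi => by
      rw [min_eq_right (Fin.le_iff_val_le_val.2 (not_lt.1 (Finset.mem_filter.1 hi).2))],
      Finset.prod_const]
    simp only [not_lt, ← Fin.le_iff_val_le_val (a := ⟨j, hj⟩), Finset.filter_le_eq_Ici,
      Fin.card_Ici]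

lemma sidep_eq_ofReal {d : ℕ} {ℓ : Fin d → ℝ≥0∞} (hℓ : ∀ i, ℓ i ≠ ⊤) (j : ℕ) :
    sidep d ℓ j =
      ENNReal.ofReal (∏ i ∈ Finset.univ.filter (fun i : Fin d => (i : ℕ) < j), (ℓ i).toReal) := by
  rw [sidep, ENNReal.ofReal_prod_of_nonneg fun _ _ => toReal_nonneg]
  exact Finset.prod_congr rfl fun i _ => (ofReal_toReal (hℓ i)).symm

theorem statement11_general (d j : ℕ) (hj : j < d) (θ : ℝ) (hθ : 0 ≤ θ) (hθ' : θ ≤ 1)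
    (p q : ℝ≥0∞) (hp : 1 ≤ p)
    (hq : q = (((d : ℝ≥0∞) - j - ENNReal.ofReal θ + 2) /
      ((d : ℝ≥0∞) - j - ENNReal.ofReal θ)) * hconj p) :
    ∃ c : ℝ≥0∞, 0 < c ∧
      ∀ N : ℕ, 2 ≤ N → ∀ ε₀ : ℝ, 0 < ε₀ → ε₀ < 1 →
        ∀ ℓ : Fin d → ℝ≥0∞, (∀ i, 0 < ℓ i ∧ ℓ i < ⊤) → Monotone ℓ →
          ∀ g : Euc d → ℝ, IsElliptic d ℓ g N ε₀ →
            c * (sidep d ℓ j * ℓ ⟨j, hj⟩ ^ θ) ^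
                ((1 / hconj p).toReal - (1 / q).toReal) ≤
              rwtNorm d ℓ g p q := by
  have hk := exponent_relation_of_eq_mul_hconj hj hθ hθ' hp hq
  set δ : ℝ := 1 / (d * (d ^ 2 + 2))
  have hd : (0 : ℝ) < d := by exact_mod_cast hj.pos
  have hδ : 0 < δ := by positivity
  refine ⟨ENNReal.ofReal (1 / 2 * (2 ^ d) ^ (1 - (1 / p).toReal) *
    ((2 * δ) ^ (d + 1)) ^ (1 / q).toReal), by positivity, ?_⟩
  intro N _ ε₀ _ hε₀ ℓ hℓ hmono g hg
  have hℓpos : ∀ i, 0 < (ℓ i).toReal := fun i => toReal_pos (hℓ i).1.ne' (hℓ i).2.ne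
  set L := (∏ i ∈ Finset.univ.filter (fun i : Fin d => (i : ℕ) < j), (ℓ i).toReal) *
    (ℓ ⟨j, hj⟩).toReal ^ θ
  have hL : 0 < L :=
    mul_pos (Finset.prod_pos fun i _ => hℓpos i) (Real.rpow_pos_of_pos (hℓpos _) θ)
  have hbox := hg.ofReal_le_rwtNorm_of_box hε₀.le (r := fun i => (ℓ (min i ⟨j, hj⟩)).toReal)
    (fun i => hℓpos _) (Qset_mono fun i => ofReal_toReal_le.trans (hmono (min_le_left _ _)))
    (hℓpos _) (fun i => toReal_mono (hℓ _).2.ne (hmono (min_le_right _ _))) hδ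
    (mul_one_div_cancel (by positivity)).le p q
  rw [prod_toReal_min hj ℓ (hℓpos _) θ,
    rpow_mul_rpow_eq_of_mul_sub_eq (by positivity) (by positivity) hL (hℓpos _) hk] at hbox
  rw [toReal_one_div_hconj hp, sidep_eq_ofReal (fun i => (hℓ i).2.ne),
    ← ofReal_toReal (hℓ ⟨j, hj⟩).2.ne, ENNReal.ofReal_rpow_of_pos (hℓpos _),
    ← ENNReal.ofReal_mul (by positivity), ENNReal.ofReal_rpow_of_pos hL,
    ← ENNReal.ofReal_mul (by positivity)]
  convert hbox using 2
  ring

/-- Knapp-type lower bound, `q > p`. -/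
theorem statement11 (d j : ℕ) (hd : 1 ≤ d) (hj : j < d) (θ : ℝ) (hθ : 0 ≤ θ) (hθ' : θ ≤ 1)
    (p q : ℝ≥0∞) (hp : 1 ≤ p) (hpq : p < q)
    (hq : q = (((d : ℝ≥0∞) - j - ENNReal.ofReal θ + 2) /
      ((d : ℝ≥0∞) - j - ENNReal.ofReal θ)) * hconj p) :
    ∃ c : ℝ≥0∞, 0 < c ∧
      ∀ N : ℕ, 2 ≤ N → ∀ ε₀ : ℝ, 0 < ε₀ → ε₀ < 1 →
        ∀ ℓ : Fin d → ℝ≥0∞, (∀ i, 0 < ℓ i ∧ ℓ i < ⊤) → Monotone ℓ →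
          ∀ g : Euc d → ℝ, IsElliptic d ℓ g N ε₀ →
            c * (sidep d ℓ j * ℓ ⟨j, hj⟩ ^ θ) ^
                ((1 / hconj p).toReal - (1 / q).toReal) ≤
              rwtNorm d ℓ g p q :=
  statement11_general d j hj θ hθ hθ' p q hp hq
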